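/- For every phase observable E, every nonempty finite set {n₁,…,n_k} ⊆ ℕ, and every Borel X ⊆ [0,2π) with O ≠ E(X) ≠ I: if a unit vector φ satisfies ∑_{i=1}^k |⟨n_i|φ⟩|² = 1, and in addition X has Lebesgue measure strictly between 0 and 2π, then 0 < ⟨φ|E(X)φ⟩ < 1. -/

import Mathlib

open MeasureTheory Complex

/-- `phaseInt X n m = (1/2π) ∫_X e^{i(n-m)x} dx`. -/
noncomputable def phaseInt (X : Set ℝ) (n m : ℕ) : ℂ :=
  ((1 / (2 * Real.pi) : ℝ) : ℂ) *
    ∫ x in X, Complex.exp (Complex.I * ((n : ℂ) - (m : ℂ)) * (x : ℂ))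

/-!
Writing `φ = ∑_{n ∈ S} aₙ eₙ`, covariance turns `⟨φ|E(X)φ⟩` into `(1/2π) ∫_X g` with
`g x = ‖∑ₘ aₘ e^{-imx} ξₘ‖²`: a nonnegative trigonometric polynomial whose mean over `[0,2π)` is
`∑ |aₙ|² = 1` because `‖ξₙ‖ = 1`. A real-analytic function that is not identically zero vanishes
only on a countable set, so `g` has positive integral over `X` and over `[0,2π) \ X` alike.
-/

open Set ComplexConjugate
open scoped InnerProductSpace

theorem AnalyticOnNhd.ae_ne_zero {E : Type*} [NormedAddCommGroup E] [NormedSpace ℝ E]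
    {μ : Measure ℝ} [NullSingletonClass μ] {f : ℝ → E} (hf : AnalyticOnNhd ℝ f univ)
    (hne : ∃ x, f x ≠ 0) : ∀ᵐ x ∂μ, f x ≠ 0 := by
  rcases hf.eqOn_zero_or_eventually_ne_zero_of_preconnected isPreconnected_univ with h | h
  · obtain ⟨x, hx⟩ := hne
    exact absurd (h (mem_univ x)) hx
  · have := ae_restrict_le_codiscreteWithin (μ := μ) MeasurableSet.univ h
    rwa [Measure.restrict_univ] at this

theorem AnalyticOnNhd.setIntegral_pos_of_nonneg {μ : Measure ℝ} [NullSingletonClass μ] {f : ℝ → ℝ}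
    (hf : AnalyticOnNhd ℝ f univ) (hf0 : ∀ x, 0 ≤ f x) (hne : ∃ x, f x ≠ 0) {s : Set ℝ}
    (hs : μ s ≠ 0) (hfs : IntegrableOn f s μ) : 0 < ∫ x in s, f x ∂μ := by
  rw [setIntegral_pos_iff_support_of_nonneg_ae (ae_of_all _ hf0) hfs, inter_comm,
    measure_inter_conull]
  · exact pos_iff_ne_zero.mpr hs
  · simpa [ae_iff, Function.support, compl_ofPred] using hf.ae_ne_zero (μ := μ) hne

theorem AnalyticOnNhd.setIntegral_lt_setIntegral_of_nonneg {μ : Measure ℝ} [NullSingletonClass μ]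
    {f : ℝ → ℝ} (hf : AnalyticOnNhd ℝ f univ) (hf0 : ∀ x, 0 ≤ f x) (hne : ∃ x, f x ≠ 0)
    {s t : Set ℝ} (ht : MeasurableSet t) (hts : t ⊆ s) (hfs : IntegrableOn f s μ)
    (hst : μ (s \ t) ≠ 0) : ∫ x in t, f x ∂μ < ∫ x in s, f x ∂μ := by
  have := hf.setIntegral_pos_of_nonneg hf0 hne hst (hfs.mono_set sdiff_subset)
  rw [setIntegral_sdiff ht hfs hts] at this
  linarith

theorem measure_sdiff_ne_zero_of_toReal_lt {α : Type*} [MeasurableSpace α] {μ : Measure α}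
    {s t : Set α} (hts : t ⊆ s) (ht : NullMeasurableSet t μ) (hs : μ s ≠ ⊤)
    (hlt : (μ t).toReal < (μ s).toReal) : μ (s \ t) ≠ 0 := by
  have ht_fin : μ t ≠ ⊤ := ne_top_of_le_ne_top hs (measure_mono hts)
  rw [measure_sdiff hts ht ht_fin, ne_eq, tsub_eq_zero_iff_le]
  exact fun hst => hlt.not_ge (ENNReal.toReal_mono ht_fin hst)

theorem Orthonormal.sum_inner_smul_eq_self_of_sum_norm_sq_eq {ι 𝕜 E : Type*} [RCLike 𝕜]
    [NormedAddCommGroup E] [InnerProductSpace 𝕜 E] {v : ι → E} (hv : Orthonormal 𝕜 v)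
    {s : Finset ι} {x : E} (hx : ∑ i ∈ s, ‖⟪v i, x⟫_𝕜‖ ^ 2 = ‖x‖ ^ 2) :
    ∑ i ∈ s, ⟪v i, x⟫_𝕜 • v i = x := by
  set p := ∑ i ∈ s, ⟪v i, x⟫_𝕜 • v i with hp_def
  have hp : ∀ i ∈ s, ⟪v i, p⟫_𝕜 = ⟪v i, x⟫_𝕜 := fun i hi => hv.inner_right_sum _ hi
  clear_value p
  have horth : ⟪p, x - p⟫_𝕜 = 0 := by
    nth_rewrite 1 [hp_def]
    simp only [sum_inner, inner_smul_left]
    exact Finset.sum_eq_zero fun i hi => by rw [inner_sub_right, hp i hi, sub_self, mul_zero]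
  have hpx : ⟪p, x⟫_𝕜 = ⟪p, p⟫_𝕜 := by rwa [inner_sub_right, sub_eq_zero] at horth
  have hp_norm : ‖p‖ ^ 2 = ‖x‖ ^ 2 := by
    rw [← hx, @norm_sq_eq_re_inner 𝕜, ← hpx]
    nth_rewrite 1 [hp_def]
    simp only [sum_inner, inner_smul_left, map_sum, RCLike.conj_mul]
    norm_cast
  have hpyth := norm_add_sq_eq_norm_sq_add_norm_sq_of_inner_eq_zero p (x - p) horth
  rw [add_sub_cancel] at hpyth
  have : ‖x - p‖ = 0 := by nlinarith [norm_nonneg (x - p)]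
  exact (sub_eq_zero.mp (norm_eq_zero.mp this)).symm

theorem phaseInt_Ico (n m : ℕ) :
    phaseInt (Ico 0 (2 * Real.pi)) n m = if n = m then 1 else 0 := by
  have hπ : 0 < 2 * Real.pi := by positivity
  rw [phaseInt]
  split_ifs with h
  · subst h
    simp [Real.volume_Ico, measureReal_def, ENNReal.toReal_ofReal Real.pi_pos.le]
    field_simp
  · have hk : I * ((n : ℂ) - m) ≠ 0 := by
      simpa [I_ne_zero, sub_eq_zero] using h
    rw [restrict_Ico_eq_restrict_Ioc, ← intervalIntegral.integral_of_le hπ.le,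
      integral_exp_mul_complex hk]
    have : cexp (I * ((n : ℂ) - m) * (2 * Real.pi)) = 1 := by
      rw [← exp_int_mul_two_pi_mul_I ((n : ℤ) - m)]
      push_cast
      ring_nf
    simp [this]

theorem integrableOn_cexp_I_mul_of_ne_top {X : Set ℝ} (hX : volume X ≠ ⊤) (t : ℂ) (ht : t.im = 0) :
    IntegrableOn (fun x : ℝ => cexp (I * t * x)) X := by
  refine Measure.integrableOn_of_bounded hX (by fun_prop) (M := 1) (ae_of_all _ fun x => ?_)
  simp [norm_exp, ht]

section

variable {H : Type*} [NormedAddCommGroup H] [InnerProductSpace ℂ H]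

theorem inner_sum_smul_map_sum_smul {ι : Type*} (T : H →L[ℂ] H) (v : ι → H) (a : ι → ℂ)
    (s : Finset ι) :
    ⟪∑ n ∈ s, a n • v n, T (∑ m ∈ s, a m • v m)⟫_ℂ =
      ∑ n ∈ s, ∑ m ∈ s, conj (a n) * a m * ⟪v n, T (v m)⟫_ℂ := by
  rw [sum_inner]
  refine Finset.sum_congr rfl fun n _ => ?_
  rw [inner_smul_left, map_sum, inner_sum, Finset.mul_sum]
  refine Finset.sum_congr rfl fun m _ => ?_
  rw [map_smul, inner_smul_right, mul_assoc]

noncomputable def phaseDensity (ξ : ℕ → H) (S : Finset ℕ) (a : ℕ → ℂ) (x : ℝ) : ℝ :=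
  ‖∑ m ∈ S, (a m * cexp (-(I * m * x))) • ξ m‖ ^ 2

theorem ofReal_phaseDensity (ξ : ℕ → H) (S : Finset ℕ) (a : ℕ → ℂ) (x : ℝ) :
    (phaseDensity ξ S a x : ℂ) =
      ∑ n ∈ S, ∑ m ∈ S, conj (a n) * a m * ⟪ξ n, ξ m⟫_ℂ * cexp (I * (n - m) * x) := by
  have hinner : (phaseDensity ξ S a x : ℂ) =
      ⟪∑ n ∈ S, (a n * cexp (-(I * n * x))) • ξ n,
        ∑ m ∈ S, (a m * cexp (-(I * m * x))) • ξ m⟫_ℂ := by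
    simp [phaseDensity, inner_self_eq_norm_sq_to_K]
  rw [hinner, sum_inner]
  refine Finset.sum_congr rfl fun n _ => ?_
  rw [inner_sum]
  refine Finset.sum_congr rfl fun m _ => ?_
  rw [inner_smul_left, inner_smul_right, map_mul, ← exp_conj]
  have : cexp (I * (n - m) * x) = cexp (conj (-(I * n * x))) * cexp (-(I * m * x)) := by
    rw [← exp_add]; congr 1; simp [conj_ofReal]; ring
  rw [this]; ring

theorem analyticOnNhd_phaseDensity (ξ : ℕ → H) (S : Finset ℕ) (a : ℕ → ℂ) :
    AnalyticOnNhd ℝ (phaseDensity ξ S a) univ := by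
  have hC : AnalyticOnNhd ℝ (fun x => (phaseDensity ξ S a x : ℂ)) univ := by
    simp_rw [ofReal_phaseDensity]
    intro x _
    refine Finset.analyticAt_fun_sum _ fun n _ => Finset.analyticAt_fun_sum _ fun m _ => ?_
    exact analyticAt_const.mul
      (analyticAt_cexp.restrictScalars.comp (analyticAt_const.mul (ofRealCLM.analyticAt x)))
  intro x hx
  exact (reCLM.analyticAt _).comp (hC x hx)

theorem ofReal_setIntegral_phaseDensity (ξ : ℕ → H) (S : Finset ℕ) (a : ℕ → ℂ) {X : Set ℝ}
    (hX : volume X ≠ ⊤) :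
    ((1 / (2 * Real.pi) * ∫ x in X, phaseDensity ξ S a x : ℝ) : ℂ) =
      ∑ n ∈ S, ∑ m ∈ S, conj (a n) * a m * (⟪ξ n, ξ m⟫_ℂ * phaseInt X n m) := by
  have hint : ∀ n m : ℕ, IntegrableOn (fun x : ℝ => cexp (I * (n - m) * x)) X :=
    fun n m => integrableOn_cexp_I_mul_of_ne_top hX _ (by simp)
  push_cast
  rw [← integral_complex_ofReal]
  simp_rw [ofReal_phaseDensity]
  rw [integral_finsetSum _ fun n _ => integrable_finsetSum _ fun m _ => (hint n m).const_mul _,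
    Finset.mul_sum]
  refine Finset.sum_congr rfl fun n _ => ?_
  rw [integral_finsetSum _ fun m _ => (hint n m).const_mul _, Finset.mul_sum]
  refine Finset.sum_congr rfl fun m _ => ?_
  rw [integral_const_mul, phaseInt]
  push_cast
  ring

theorem setIntegral_Ico_phaseDensity {ξ : ℕ → H} (hξ : ∀ n, ‖ξ n‖ = 1) (S : Finset ℕ)
    (a : ℕ → ℂ) :
    1 / (2 * Real.pi) * ∫ x in Ico 0 (2 * Real.pi), phaseDensity ξ S a x = ∑ n ∈ S, ‖a n‖ ^ 2 := by
  apply ofReal_injective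
  rw [ofReal_setIntegral_phaseDensity ξ S a measure_Ico_lt_top.ne]
  simp only [phaseInt_Ico, mul_ite, mul_one, mul_zero, Finset.sum_ite_eq, ofReal_sum]
  refine Finset.sum_congr rfl fun n hn => ?_
  rw [if_pos hn, inner_self_eq_norm_sq_to_K, hξ, conj_mul']
  simp

end

theorem stmt18 {H : Type*} [NormedAddCommGroup H] [InnerProductSpace ℂ H]
    (e : HilbertBasis ℕ ℂ H) (ξ : ℕ → H) (hξ : ∀ n, ‖ξ n‖ = 1)
    (c : ℕ → ℕ → ℂ) (hc : ∀ n m, c n m = (inner ℂ (ξ n) (ξ m) : ℂ))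
    (E : Set ℝ → (H →L[ℂ] H))
    (hE : ∀ X : Set ℝ, MeasurableSet X → X ⊆ Set.Ico 0 (2 * Real.pi) → ∀ n m : ℕ,
      (inner ℂ (e n) (E X (e m)) : ℂ) = c n m * phaseInt X n m)
    (X : Set ℝ) (hXm : MeasurableSet X) (hXs : X ⊆ Set.Ico 0 (2 * Real.pi))
    (hl : 0 < (volume X).toReal) (hu : (volume X).toReal < 2 * Real.pi)
    (φ : H) (hφ : ‖φ‖ = 1)
    (S : Finset ℕ)
    (hsupp : ∑ n ∈ S, ‖(inner ℂ (e n) φ : ℂ)‖ ^ 2 = 1) :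
    0 < (inner ℂ φ (E X φ) : ℂ).re ∧ (inner ℂ φ (E X φ) : ℂ).re < 1 := by
  set a : ℕ → ℂ := fun n => ⟪e n, φ⟫_ℂ
  set g := phaseDensity ξ S a
  have hφS : ∑ n ∈ S, a n • e n = φ :=
    e.orthonormal.sum_inner_smul_eq_self_of_sum_norm_sq_eq (by rw [hsupp, hφ, one_pow])
  have hXfin : volume X ≠ ⊤ := ((measure_mono hXs).trans_lt measure_Ico_lt_top).ne
  have hprob : (⟪φ, E X φ⟫_ℂ).re = 1 / (2 * Real.pi) * ∫ x in X, g x := by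
    rw [← hφS, inner_sum_smul_map_sum_smul, ← ofReal_re (1 / (2 * Real.pi) * _),
      ofReal_setIntegral_phaseDensity ξ S a hXfin]
    simp only [hE X hXm hXs, hc]
  have htotal : 1 / (2 * Real.pi) * ∫ x in Ico 0 (2 * Real.pi), g x = 1 :=
    (setIntegral_Ico_phaseDensity hξ S a).trans hsupp
  have hg : AnalyticOnNhd ℝ g univ := analyticOnNhd_phaseDensity ξ S a
  have hg0 : ∀ x, 0 ≤ g x := fun x => sq_nonneg _
  have hg_ne : ∃ x, g x ≠ 0 := by
    by_contra! h
    simp [h] at htotal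
  have hg_int : IntegrableOn g (Ico 0 (2 * Real.pi)) :=
    ((hg.continuousOn.mono (subset_univ _)).integrableOn_Icc).mono_set Ico_subset_Icc_self
  have hX0 : volume X ≠ 0 := fun h => by simp [h] at hl
  have hXc0 : volume (Ico 0 (2 * Real.pi) \ X) ≠ 0 :=
    measure_sdiff_ne_zero_of_toReal_lt hXs hXm.nullMeasurableSet measure_Ico_lt_top.ne
      (by simpa [Real.volume_Ico, Real.pi_pos.le] using hu)
  have hpos := hg.setIntegral_pos_of_nonneg hg0 hg_ne hX0 (hg_int.mono_set hXs)
  have hlt := hg.setIntegral_lt_setIntegral_of_nonneg hg0 hg_ne hXm hXs hg_int hXc0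
  rw [hprob]
  exact ⟨by positivity, lt_of_lt_of_eq (by gcongr) htotal⟩
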